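/- Define the measure χ on terms of full system F by: χ(x)=1; χ(λx.N)=χ(in₁N)=χ(in₂N)=χ(N); χ(⟨M₁,M₂⟩)=χ(M₁)+χ(M₂); χ(FA)=χ(F)²χ(A); χ(Pπᵢ)=χ(P)²; χ(Nσ)=χ(N)²; χ(W[x.S,y.T])=χ(W)²(χ(S)+χ(T))+1; χ(N[x.P])=χ(N)²χ(P)+1; χ(Aε)=χ(A)²+1. Then χ(M) ≥ 1 for every term M, and for every commutative reduction step M ⇝ M' we have χ(M) > χ(M'). -/

import Mathlib

/-! Types of full system F: type variables (de Bruijn), ⊥, →, ∧, ∨, ∀, ∃. -/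
inductive FTy : Type
  | tvar : ℕ → FTy
  | bot  : FTy
  | arr  : FTy → FTy → FTy
  | and  : FTy → FTy → FTy
  | or   : FTy → FTy → FTy
  | all  : FTy → FTy
  | ex   : FTy → FTy
  deriving DecidableEq

namespace FTy

/-- Shift the free type variables `≥ c` by `d`. -/
def shift (c d : ℕ) : FTy → FTy
  | tvar n => if n < c then tvar n else tvar (n + d)
  | bot => bot
  | arr a b => arr (shift c d a) (shift c d b)
  | and a b => and (shift c d a) (shift c d b)
  | or a b => or (shift c d a) (shift c d b)
  | all t => all (shift (c + 1) d t)
  | ex t => ex (shift (c + 1) d t)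

/-- Substitution of a type for type variable `n`. -/
def subst : FTy → ℕ → FTy → FTy
  | tvar m, n, s => if m = n then s else if n < m then tvar (m - 1) else tvar m
  | bot, _, _ => bot
  | arr a b, n, s => arr (subst a n s) (subst b n s)
  | and a b, n, s => and (subst a n s) (subst b n s)
  | or a b, n, s => or (subst a n s) (subst b n s)
  | all t, n, s => all (subst t (n + 1) (shift 0 1 s))
  | ex t, n, s => ex (subst t (n + 1) (shift 0 1 s))

end FTy

/-- The helper CPS type translation `τ*` (with `τ̄ = (τ*→⊥)→⊥` inlined). -/
def star : FTy → FTy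
  | .tvar n => .tvar n
  | .bot => .bot
  | .arr a b =>
      .arr (.arr (.arr (star a) .bot) .bot) (.arr (.arr (star b) .bot) .bot)
  | .and a b =>
      .arr (.arr (.arr (.arr (star a) .bot) .bot)
        (.arr (.arr (.arr (star b) .bot) .bot) .bot)) .bot
  | .or a b =>
      .arr (.arr (.arr (.arr (star a) .bot) .bot) .bot)
        (.arr (.arr (.arr (.arr (star b) .bot) .bot) .bot) .bot)
  | .all t => .all (.arr (.arr (star t) .bot) .bot)
  | .ex t => .arr (.all (.arr (.arr (.arr (star t) .bot) .bot) .bot)) .bot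

/-- The CPS type translation `τ̄ = (τ*→⊥)→⊥`. -/
def bar (t : FTy) : FTy := .arr (.arr (star t) .bot) .bot

/-- Church-style terms of full system F (de Bruijn for both term and type variables). -/
inductive FTm : Type
  | var     : ℕ → FTm
  | lam     : FTy → FTm → FTm
  | app     : FTm → FTm → FTm
  | pair    : FTm → FTm → FTm
  | inl     : FTy → FTy → FTm → FTm
  | inr     : FTy → FTy → FTm → FTm
  | proj1   : FTm → FTm
  | proj2   : FTm → FTm
  | case    : FTm → FTm → FTm → FTy → FTm   -- W[x.S, y.T]^δ
  | eps     : FTm → FTy → FTm               -- A^⊥ ε_σ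
  | tlam    : FTm → FTm                     -- Λp. M
  | tapp    : FTm → FTy → FTm               -- M σ
  | exintro : FTm → FTy → FTm               -- [M, σ]
  | exelim  : FTm → FTm → FTy → FTm         -- M [x.P]^δ  (binds a type and a term var in P)
  deriving DecidableEq

namespace FTm

/-- Shift free *term* variables `≥ c` by `d`. -/
def shiftTm (c d : ℕ) : FTm → FTm
  | var n => if n < c then var n else var (n + d)
  | lam σ t => lam σ (shiftTm (c + 1) d t)
  | app s t => app (shiftTm c d s) (shiftTm c d t)
  | pair s t => pair (shiftTm c d s) (shiftTm c d t)
  | inl σ τ t => inl σ τ (shiftTm c d t)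
  | inr σ τ t => inr σ τ (shiftTm c d t)
  | proj1 t => proj1 (shiftTm c d t)
  | proj2 t => proj2 (shiftTm c d t)
  | case w s t δ => case (shiftTm c d w) (shiftTm (c + 1) d s) (shiftTm (c + 1) d t) δ
  | eps t σ => eps (shiftTm c d t) σ
  | tlam t => tlam (shiftTm c d t)
  | tapp t σ => tapp (shiftTm c d t) σ
  | exintro t σ => exintro (shiftTm c d t) σ
  | exelim m p δ => exelim (shiftTm c d m) (shiftTm (c + 1) d p) δ

/-- Shift free *type* variables `≥ c` by `d` in a term. -/
def shiftTy (c d : ℕ) : FTm → FTm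
  | var n => var n
  | lam σ t => lam (σ.shift c d) (shiftTy c d t)
  | app s t => app (shiftTy c d s) (shiftTy c d t)
  | pair s t => pair (shiftTy c d s) (shiftTy c d t)
  | inl σ τ t => inl (σ.shift c d) (τ.shift c d) (shiftTy c d t)
  | inr σ τ t => inr (σ.shift c d) (τ.shift c d) (shiftTy c d t)
  | proj1 t => proj1 (shiftTy c d t)
  | proj2 t => proj2 (shiftTy c d t)
  | case w s t δ => case (shiftTy c d w) (shiftTy c d s) (shiftTy c d t) (δ.shift c d)
  | eps t σ => eps (shiftTy c d t) (σ.shift c d)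
  | tlam t => tlam (shiftTy (c + 1) d t)
  | tapp t σ => tapp (shiftTy c d t) (σ.shift c d)
  | exintro t σ => exintro (shiftTy c d t) (σ.shift c d)
  | exelim m p δ => exelim (shiftTy c d m) (shiftTy (c + 1) d p) (δ.shift c d)

/-- Substitute term `s` for term variable `n`. -/
def substTm : FTm → ℕ → FTm → FTm
  | var m, n, s => if m = n then s else if n < m then var (m - 1) else var m
  | lam σ t, n, s => lam σ (substTm t (n + 1) (shiftTm 0 1 s))
  | app a b, n, s => app (substTm a n s) (substTm b n s)
  | pair a b, n, s => pair (substTm a n s) (substTm b n s)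
  | inl σ τ t, n, s => inl σ τ (substTm t n s)
  | inr σ τ t, n, s => inr σ τ (substTm t n s)
  | proj1 t, n, s => proj1 (substTm t n s)
  | proj2 t, n, s => proj2 (substTm t n s)
  | case w a b δ, n, s =>
      case (substTm w n s) (substTm a (n + 1) (shiftTm 0 1 s)) (substTm b (n + 1) (shiftTm 0 1 s)) δ
  | eps t σ, n, s => eps (substTm t n s) σ
  | tlam t, n, s => tlam (substTm t n (shiftTy 0 1 s))
  | tapp t σ, n, s => tapp (substTm t n s) σ
  | exintro t σ, n, s => exintro (substTm t n s) σ
  | exelim m p δ, n, s =>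
      exelim (substTm m n s) (substTm p (n + 1) (shiftTy 0 1 (shiftTm 0 1 s))) δ

/-- Substitute type `ρ` for type variable `n` in a term. -/
def substTy : FTm → ℕ → FTy → FTm
  | var m, _, _ => var m
  | lam σ t, n, ρ => lam (σ.subst n ρ) (substTy t n ρ)
  | app a b, n, ρ => app (substTy a n ρ) (substTy b n ρ)
  | pair a b, n, ρ => pair (substTy a n ρ) (substTy b n ρ)
  | inl σ τ t, n, ρ => inl (σ.subst n ρ) (τ.subst n ρ) (substTy t n ρ)
  | inr σ τ t, n, ρ => inr (σ.subst n ρ) (τ.subst n ρ) (substTy t n ρ)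
  | proj1 t, n, ρ => proj1 (substTy t n ρ)
  | proj2 t, n, ρ => proj2 (substTy t n ρ)
  | case w a b δ, n, ρ => case (substTy w n ρ) (substTy a n ρ) (substTy b n ρ) (δ.subst n ρ)
  | eps t σ, n, ρ => eps (substTy t n ρ) (σ.subst n ρ)
  | tlam t, n, ρ => tlam (substTy t (n + 1) (ρ.shift 0 1))
  | tapp t σ, n, ρ => tapp (substTy t n ρ) (σ.subst n ρ)
  | exintro t σ, n, ρ => exintro (substTy t n ρ) (σ.subst n ρ)
  | exelim m p δ, n, ρ =>
      exelim (substTy m n ρ) (substTy p (n + 1) (ρ.shift 0 1)) (δ.subst n ρ)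

/-- Size of a term (invariant under shifting). -/
def size : FTm → ℕ
  | var _ => 1
  | lam _ t => size t + 1
  | app s t => size s + size t + 1
  | pair s t => size s + size t + 1
  | inl _ _ t => size t + 1
  | inr _ _ t => size t + 1
  | proj1 t => size t + 1
  | proj2 t => size t + 1
  | case w s t _ => size w + size s + size t + 1
  | eps t _ => size t + 1
  | tlam t => size t + 1
  | tapp t _ => size t + 1
  | exintro t _ => size t + 1
  | exelim m p _ => size m + size p + 1

@[simp] theorem size_shiftTm (c d : ℕ) (t : FTm) : (shiftTm c d t).size = t.size := by
  induction t generalizing c with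
  | var n => simp only [shiftTm]; split <;> rfl
  | _ => simp_all [shiftTm, size]

end FTm

/-- Typing judgment of full system F. -/
inductive HasTyF : List FTy → FTm → FTy → Prop
  | var {Γ n τ} : Γ[n]? = some τ → HasTyF Γ (.var n) τ
  | lam {Γ σ τ t} : HasTyF (σ :: Γ) t τ → HasTyF Γ (.lam σ t) (.arr σ τ)
  | app {Γ σ τ s t} : HasTyF Γ s (.arr σ τ) → HasTyF Γ t σ → HasTyF Γ (.app s t) τ
  | pair {Γ σ τ s t} : HasTyF Γ s σ → HasTyF Γ t τ → HasTyF Γ (.pair s t) (.and σ τ)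
  | inl {Γ σ τ t} : HasTyF Γ t σ → HasTyF Γ (.inl σ τ t) (.or σ τ)
  | inr {Γ σ τ t} : HasTyF Γ t τ → HasTyF Γ (.inr σ τ t) (.or σ τ)
  | proj1 {Γ σ τ t} : HasTyF Γ t (.and σ τ) → HasTyF Γ (.proj1 t) σ
  | proj2 {Γ σ τ t} : HasTyF Γ t (.and σ τ) → HasTyF Γ (.proj2 t) τ
  | case {Γ σ τ δ w s t} : HasTyF Γ w (.or σ τ) → HasTyF (σ :: Γ) s δ → HasTyF (τ :: Γ) t δ →
      HasTyF Γ (.case w s t δ) δ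
  | eps {Γ σ t} : HasTyF Γ t .bot → HasTyF Γ (.eps t σ) σ
  | tlam {Γ τ t} : HasTyF (Γ.map (FTy.shift 0 1)) t τ → HasTyF Γ (.tlam t) (.all τ)
  | tapp {Γ τ σ t} : HasTyF Γ t (.all τ) → HasTyF Γ (.tapp t σ) (τ.subst 0 σ)
  | exintro {Γ ρ σ t} : HasTyF Γ t (ρ.subst 0 σ) → HasTyF Γ (.exintro t σ) (.ex ρ)
  | exelim {Γ ρ δ m p} : HasTyF Γ m (.ex ρ) →
      HasTyF (ρ :: Γ.map (FTy.shift 0 1)) p (δ.shift 0 1) → HasTyF Γ (.exelim m p δ) δ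

/-- Compatible (congruence) closure of a root relation on terms of full system F. -/
inductive CompatF (R : FTm → FTm → Prop) : FTm → FTm → Prop
  | root {a b} : R a b → CompatF R a b
  | lam {σ a b} : CompatF R a b → CompatF R (.lam σ a) (.lam σ b)
  | appL {a b t} : CompatF R a b → CompatF R (.app a t) (.app b t)
  | appR {a b t} : CompatF R a b → CompatF R (.app t a) (.app t b)
  | pairL {a b t} : CompatF R a b → CompatF R (.pair a t) (.pair b t)
  | pairR {a b t} : CompatF R a b → CompatF R (.pair t a) (.pair t b)
  | inl {σ τ a b} : CompatF R a b → CompatF R (.inl σ τ a) (.inl σ τ b)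
  | inr {σ τ a b} : CompatF R a b → CompatF R (.inr σ τ a) (.inr σ τ b)
  | proj1 {a b} : CompatF R a b → CompatF R (.proj1 a) (.proj1 b)
  | proj2 {a b} : CompatF R a b → CompatF R (.proj2 a) (.proj2 b)
  | caseW {δ a b s t} : CompatF R a b → CompatF R (.case a s t δ) (.case b s t δ)
  | caseS {δ w a b t} : CompatF R a b → CompatF R (.case w a t δ) (.case w b t δ)
  | caseT {δ w s a b} : CompatF R a b → CompatF R (.case w s a δ) (.case w s b δ)
  | eps {σ a b} : CompatF R a b → CompatF R (.eps a σ) (.eps b σ)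
  | tlam {a b} : CompatF R a b → CompatF R (.tlam a) (.tlam b)
  | tapp {σ a b} : CompatF R a b → CompatF R (.tapp a σ) (.tapp b σ)
  | exintro {σ a b} : CompatF R a b → CompatF R (.exintro a σ) (.exintro b σ)
  | exelimM {δ a b p} : CompatF R a b → CompatF R (.exelim a p δ) (.exelim b p δ)
  | exelimP {δ m a b} : CompatF R a b → CompatF R (.exelim m a δ) (.exelim m b δ)

/-- Root β-reductions of full system F. -/
inductive FBetaRoot : FTm → FTm → Prop
  | beta {σ m a} : FBetaRoot (.app (.lam σ m) a) (m.substTm 0 a)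
  | pi1 {m n} : FBetaRoot (.proj1 (.pair m n)) m
  | pi2 {m n} : FBetaRoot (.proj2 (.pair m n)) n
  | inl {σ τ δ a s t} : FBetaRoot (.case (.inl σ τ a) s t δ) (s.substTm 0 a)
  | inr {σ τ δ b s t} : FBetaRoot (.case (.inr σ τ b) s t δ) (t.substTm 0 b)
  | exelim {δ σ m p} :
      FBetaRoot (.exelim (.exintro m σ) p δ) ((p.substTy 0 σ).substTm 0 m)
  | tbeta {m σ} : FBetaRoot (.tapp (.tlam m) σ) (m.substTy 0 σ)

/-- The 21 root commutative (permutative) reductions of full system F. -/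
inductive FCommRoot : FTm → FTm → Prop
  -- pattern (W[x.S,y.T])E ⇝ W[x.SE,y.TE]
  | caseApp {w α β s t n} :
      FCommRoot (.app (.case w s t (.arr α β)) n)
        (.case w (.app s (n.shiftTm 0 1)) (.app t (n.shiftTm 0 1)) β)
  | casePi1 {w α β s t} :
      FCommRoot (.proj1 (.case w s t (.and α β))) (.case w (.proj1 s) (.proj1 t) α)
  | casePi2 {w α β s t} :
      FCommRoot (.proj2 (.case w s t (.and α β))) (.case w (.proj2 s) (.proj2 t) β)
  | caseCase {w α β δ s t a b} :
      FCommRoot (.case (.case w s t (.or α β)) a b δ)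
        (.case w (.case s (a.shiftTm 1 1) (b.shiftTm 1 1) δ)
          (.case t (a.shiftTm 1 1) (b.shiftTm 1 1) δ) δ)
  | caseEps {w s t α} :
      FCommRoot (.eps (.case w s t .bot) α) (.case w (.eps s α) (.eps t α) α)
  | caseTapp {w α s t γ} :
      FCommRoot (.tapp (.case w s t (.all α)) γ)
        (.case w (.tapp s γ) (.tapp t γ) (α.subst 0 γ))
  | caseExelim {w α s t p ξ} :
      FCommRoot (.exelim (.case w s t (.ex α)) p ξ)
        (.case w (.exelim s (p.shiftTm 1 1) ξ) (.exelim t (p.shiftTm 1 1) ξ) ξ)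
  -- pattern (A ε)E ⇝ A ε
  | epsApp {a σ τ n} : FCommRoot (.app (.eps a (.arr σ τ)) n) (.eps a τ)
  | epsPi1 {a σ τ} : FCommRoot (.proj1 (.eps a (.and σ τ))) (.eps a σ)
  | epsPi2 {a σ τ} : FCommRoot (.proj2 (.eps a (.and σ τ))) (.eps a τ)
  | epsCase {a σ τ δ s t} : FCommRoot (.case (.eps a (.or σ τ)) s t δ) (.eps a δ)
  | epsEps {a σ} : FCommRoot (.eps (.eps a .bot) σ) (.eps a σ)
  | epsTapp {a α γ} : FCommRoot (.tapp (.eps a (.all α)) γ) (.eps a (α.subst 0 γ))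
  | epsExelim {a α p ξ} : FCommRoot (.exelim (.eps a (.ex α)) p ξ) (.eps a ξ)
  -- pattern (M[x.P])E ⇝ M[x.PE]
  | exelimApp {m p α β n} :
      FCommRoot (.app (.exelim m p (.arr α β)) n)
        (.exelim m (.app p ((n.shiftTm 0 1).shiftTy 0 1)) β)
  | exelimPi1 {m p α β} :
      FCommRoot (.proj1 (.exelim m p (.and α β))) (.exelim m (.proj1 p) α)
  | exelimPi2 {m p α β} :
      FCommRoot (.proj2 (.exelim m p (.and α β))) (.exelim m (.proj2 p) β)
  | exelimCase {m p α β a b ξ} :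
      FCommRoot (.case (.exelim m p (.or α β)) a b ξ)
        (.exelim m (.case p ((a.shiftTm 1 1).shiftTy 0 1) ((b.shiftTm 1 1).shiftTy 0 1)
          (ξ.shift 0 1)) ξ)
  | exelimEps {m p σ} :
      FCommRoot (.eps (.exelim m p .bot) σ) (.exelim m (.eps p (σ.shift 0 1)) σ)
  | exelimTapp {m p α γ} :
      FCommRoot (.tapp (.exelim m p (.all α)) γ)
        (.exelim m (.tapp p (γ.shift 0 1)) (α.subst 0 γ))
  | exelimExelim {m p α n ξ} :
      FCommRoot (.exelim (.exelim m p (.ex α)) n ξ)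
        (.exelim m (.exelim p ((n.shiftTm 1 1).shiftTy 1 1) (ξ.shift 0 1)) ξ)

/-- One β-reduction step anywhere in a term of full system F. -/
def FBeta : FTm → FTm → Prop := CompatF FBetaRoot

/-- One commutative (permutative) reduction step anywhere in a term of full system F. -/
def FComm : FTm → FTm → Prop := CompatF FCommRoot

/-- The measure χ on terms of full system F. -/
def chi : FTm → ℕ
  | .var _ => 1
  | .lam _ t => chi t
  | .app s t => chi s ^ 2 * chi t
  | .pair s t => chi s + chi t
  | .inl _ _ t => chi t
  | .inr _ _ t => chi t
  | .proj1 t => chi t ^ 2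
  | .proj2 t => chi t ^ 2
  | .case w s t _ => chi w ^ 2 * (chi s + chi t) + 1
  | .eps t _ => chi t ^ 2 + 1
  | .tlam t => chi t
  | .tapp t _ => chi t ^ 2
  | .exintro t _ => chi t
  | .exelim m p _ => chi m ^ 2 * chi p + 1

/-! ## The target calculus: system F with → and ∀ only -/

/-- (Curry-style) terms of the target system F (→, ∀). -/
inductive FTm1 : Type
  | var  : ℕ → FTm1
  | lam  : FTm1 → FTm1
  | app  : FTm1 → FTm1 → FTm1
  | tlam : FTm1 → FTm1
  | tapp : FTm1 → FTy → FTm1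
  deriving DecidableEq

namespace FTm1

/-- Shift free term variables `≥ c` by `d`. -/
def shiftTm (c d : ℕ) : FTm1 → FTm1
  | var n => if n < c then var n else var (n + d)
  | lam t => lam (shiftTm (c + 1) d t)
  | app s t => app (shiftTm c d s) (shiftTm c d t)
  | tlam t => tlam (shiftTm c d t)
  | tapp t σ => tapp (shiftTm c d t) σ

/-- Shift free type variables `≥ c` by `d`. -/
def shiftTy (c d : ℕ) : FTm1 → FTm1
  | var n => var n
  | lam t => lam (shiftTy c d t)
  | app s t => app (shiftTy c d s) (shiftTy c d t)
  | tlam t => tlam (shiftTy (c + 1) d t)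
  | tapp t σ => tapp (shiftTy c d t) (σ.shift c d)

/-- Substitute a term for term variable `n`. -/
def substTm : FTm1 → ℕ → FTm1 → FTm1
  | var m, n, s => if m = n then s else if n < m then var (m - 1) else var m
  | lam t, n, s => lam (substTm t (n + 1) (shiftTm 0 1 s))
  | app a b, n, s => app (substTm a n s) (substTm b n s)
  | tlam t, n, s => tlam (substTm t n (shiftTy 0 1 s))
  | tapp t σ, n, s => tapp (substTm t n s) σ

/-- Substitute a type for type variable `n`. -/
def substTy : FTm1 → ℕ → FTy → FTm1
  | var m, _, _ => var m
  | lam t, n, ρ => lam (substTy t n ρ)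
  | app a b, n, ρ => app (substTy a n ρ) (substTy b n ρ)
  | tlam t, n, ρ => tlam (substTy t (n + 1) (ρ.shift 0 1))
  | tapp t σ, n, ρ => tapp (substTy t n ρ) (σ.subst n ρ)

end FTm1

/-- Typing in the target system F (→, ∀ fragment). -/
inductive HasTyT : List FTy → FTm1 → FTy → Prop
  | var {Γ n τ} : Γ[n]? = some τ → HasTyT Γ (.var n) τ
  | lam {Γ σ τ t} : HasTyT (σ :: Γ) t τ → HasTyT Γ (.lam t) (.arr σ τ)
  | app {Γ σ τ s t} : HasTyT Γ s (.arr σ τ) → HasTyT Γ t σ → HasTyT Γ (.app s t) τ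
  | tlam {Γ τ t} : HasTyT (Γ.map (FTy.shift 0 1)) t τ → HasTyT Γ (.tlam t) (.all τ)
  | tapp {Γ τ σ t} : HasTyT Γ t (.all τ) → HasTyT Γ (.tapp t σ) (τ.subst 0 σ)

/-- One β-reduction step (term or type β) in the target system F. -/
inductive TStep : FTm1 → FTm1 → Prop
  | beta {t s} : TStep (.app (.lam t) s) (t.substTm 0 s)
  | tbeta {t σ} : TStep (.tapp (.tlam t) σ) (t.substTy 0 σ)
  | lam {a b} : TStep a b → TStep (.lam a) (.lam b)
  | appL {a b t} : TStep a b → TStep (.app a t) (.app b t)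
  | appR {a b t} : TStep a b → TStep (.app t a) (.app t b)
  | tlam {a b} : TStep a b → TStep (.tlam a) (.tlam b)
  | tapp {σ a b} : TStep a b → TStep (.tapp a σ) (.tapp b σ)

/-! ## The CPS translation -/

/-- The helper translation `M ⋄ K` of the call-by-name CPS translation.
The eliminator continuations `E @ K` are inlined (see `atK` below). -/
def dia : FTm → FTm1 → FTm1
  | .var n, K => .app (.var n) K
  | .lam _ t, K => .app K (.lam (.lam (dia (t.shiftTm 0 1) (.var 0))))
  | .app s t, K =>
      dia s (.lam (.app (.app (.var 0) (.lam (dia (t.shiftTm 0 2) (.var 0))))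
        (K.shiftTm 0 1)))
  | .pair s t, K =>
      .app K (.lam (.app (.app (.var 0) (.lam (dia (s.shiftTm 0 2) (.var 0))))
        (.lam (dia (t.shiftTm 0 2) (.var 0)))))
  | .inl _ _ t, K => .app K (.lam (.lam (.app (.var 1) (.lam (dia (t.shiftTm 0 3) (.var 0))))))
  | .inr _ _ t, K => .app K (.lam (.lam (.app (.var 0) (.lam (dia (t.shiftTm 0 3) (.var 0))))))
  | .proj1 t, K => dia t (.lam (.app (.var 0) (.lam (.lam (.app (.var 1) (K.shiftTm 0 3))))))
  | .proj2 t, K => dia t (.lam (.app (.var 0) (.lam (.lam (.app (.var 0) (K.shiftTm 0 3))))))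
  | .case w s t _, K =>
      dia w (.lam (.app (.app (.var 0) (.lam (dia (s.shiftTm 1 1) (K.shiftTm 0 2))))
        (.lam (dia (t.shiftTm 1 1) (K.shiftTm 0 2)))))
  | .eps t _, _ => dia t (.lam (.var 0))
  | .tlam t, K => .app K (.tlam (.lam (dia (t.shiftTm 0 1) (.var 0))))
  | .tapp t σ, K => dia t (.lam (.app (.tapp (.var 0) (bar σ)) (K.shiftTm 0 1)))
  | .exintro t σ, K =>
      .app K (.lam (.app (.tapp (.var 0) (bar σ)) (.lam (dia (t.shiftTm 0 2) (.var 0)))))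
  | .exelim m p _, K =>
      dia m (.lam (.app (.var 0)
        (.tlam (.lam (dia (p.shiftTm 1 1) ((K.shiftTy 0 1).shiftTm 0 2))))))
  termination_by t _ => t.size
  decreasing_by all_goals simp [FTm.size] <;> omega

/-- The CPS translation of a term: `M̄ = λk.(M ⋄ k)`. -/
def cps (t : FTm) : FTm1 := .lam (dia (t.shiftTm 0 1) (.var 0))

/-- Eliminators of full system F, as standalone syntax. -/
inductive Elim : Type
  | arg   : FTm → Elim                    -- · R
  | pi1   : Elim
  | pi2   : Elim
  | cases : FTm → FTm → Elim              -- · [x.S, y.T]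
  | tyArg : FTy → Elim                    -- · σ
  | exE   : FTm → Elim                    -- · [x.S]
  | epsE  : Elim                          -- · ε

/-- The helper translation `E @ K` on eliminators. -/
def atK : Elim → FTm1 → FTm1
  | .arg n, K =>
      .lam (.app (.app (.var 0) (.lam (dia (n.shiftTm 0 2) (.var 0)))) (K.shiftTm 0 1))
  | .pi1, K => .lam (.app (.var 0) (.lam (.lam (.app (.var 1) (K.shiftTm 0 3)))))
  | .pi2, K => .lam (.app (.var 0) (.lam (.lam (.app (.var 0) (K.shiftTm 0 3)))))
  | .cases s t, K =>
      .lam (.app (.app (.var 0) (.lam (dia (s.shiftTm 1 1) (K.shiftTm 0 2))))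
        (.lam (dia (t.shiftTm 1 1) (K.shiftTm 0 2))))
  | .tyArg σ, K => .lam (.app (.tapp (.var 0) (bar σ)) (K.shiftTm 0 1))
  | .exE p, K =>
      .lam (.app (.var 0) (.tlam (.lam (dia (p.shiftTm 1 1) ((K.shiftTy 0 1).shiftTm 0 2)))))
  | .epsE, _ => .lam (.var 0)

/-- Term substitution on eliminators. -/
def esubstTm : Elim → ℕ → FTm → Elim
  | .arg m, n, s => .arg (m.substTm n s)
  | .pi1, _, _ => .pi1
  | .pi2, _, _ => .pi2
  | .cases a b, n, s =>
      .cases (a.substTm (n + 1) (s.shiftTm 0 1)) (b.substTm (n + 1) (s.shiftTm 0 1))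
  | .tyArg σ, _, _ => .tyArg σ
  | .exE p, n, s => .exE (p.substTm (n + 1) ((s.shiftTm 0 1).shiftTy 0 1))
  | .epsE, _, _ => .epsE

/-- Type substitution on eliminators. -/
def esubstTy : Elim → ℕ → FTy → Elim
  | .arg m, n, ρ => .arg (m.substTy n ρ)
  | .pi1, _, _ => .pi1
  | .pi2, _, _ => .pi2
  | .cases a b, n, ρ => .cases (a.substTy n ρ) (b.substTy n ρ)
  | .tyArg σ, n, ρ => .tyArg (σ.subst n ρ)
  | .exE p, n, ρ => .exE (p.substTy (n + 1) (ρ.shift 0 1))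
  | .epsE, _, _ => .epsE

/-!
Every eliminator `E` acts on the measure as `χ (N E) = χ N ^ 2 * m + r` with `m ≥ 1` and
`r ≤ 1`. Writing `W` for the square of the measure of the head term, each commutation pattern
then becomes an elementary inequality; e.g. `M[x.P] E ⇝ M[x.P E]` is
`W (χ P ^ 2 m + r) + 1 < (W χ P + 1) ^ 2 m + r`, and for `w[x.S, y.T] E` one also
uses `χ (S E) + χ (T E) ≤ (χ S + χ T) ^ 2 m + r`. Since `χ` is strictly monotone in every
immediate subterm, the decrease at the root propagates to all contexts.
-/

theorem chi_pos (M : FTm) : 0 < chi M := by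
  induction M <;> simp only [chi] <;> positivity

theorem chi_shiftTm (c d : ℕ) (t : FTm) : chi (t.shiftTm c d) = chi t := by
  induction t generalizing c with
  | var n => simp only [FTm.shiftTm]; split <;> rfl
  | _ => simp_all [FTm.shiftTm, chi]

theorem chi_shiftTy (c d : ℕ) (t : FTm) : chi (t.shiftTy c d) = chi t := by
  induction t generalizing c with
  | var n => rfl
  | _ => simp_all [FTm.shiftTy, chi]

/-- `χ (N E) = elimChi m r (χ N)`, where `m` is `χ R` for an argument `R`, `χ S + χ T` for
`[x.S, y.T]`, `χ P` for `[x.P]` and `1` otherwise, and `r` is `1` for `[x.S, y.T]`, `[x.P]`, `ε`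
and `0` otherwise. -/
def elimChi (m r x : ℕ) : ℕ := x ^ 2 * m + r

section elimChi

variable {m r : ℕ}

theorem lt_elimChi (hm : 1 ≤ m) {x : ℕ} (hx : 2 ≤ x) : x < elimChi m r x := by
  unfold elimChi
  nlinarith

theorem elimChi_add_le (hm : 1 ≤ m) (hr : r ≤ 1) {s t : ℕ} (hs : 1 ≤ s) (ht : 1 ≤ t) :
    elimChi m r s + elimChi m r t ≤ elimChi m r (s + t) := by
  unfold elimChi
  nlinarith [Nat.mul_le_mul (Nat.mul_le_mul hs ht) hm]

theorem mul_elimChi_add_one_lt (hm : 1 ≤ m) (hr : r ≤ 1) {W y : ℕ} (hW : 1 ≤ W)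
    (hy : 1 ≤ y) :
    W * elimChi m r y + 1 < elimChi m r (W * y + 1) := by
  have hWy : W * 1 * 1 ≤ W * y * m := Nat.mul_le_mul (Nat.mul_le_mul le_rfl hy) hm
  have hWr : W * r ≤ W * 1 := Nat.mul_le_mul le_rfl hr
  have hsq : W * (y ^ 2 * m) ≤ W * W * (y ^ 2 * m) :=
    Nat.mul_le_mul_right _ (Nat.le_mul_self W)
  unfold elimChi
  nlinarith

theorem chi_case_comm_lt (hm : 1 ≤ m) (hr : r ≤ 1) (w s t : FTm) :
    chi w ^ 2 * (elimChi m r (chi s) + elimChi m r (chi t)) + 1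
      < elimChi m r (chi w ^ 2 * (chi s + chi t) + 1) :=
  calc chi w ^ 2 * (elimChi m r (chi s) + elimChi m r (chi t)) + 1
      ≤ chi w ^ 2 * elimChi m r (chi s + chi t) + 1 := by
        gcongr; exact elimChi_add_le hm hr (chi_pos s) (chi_pos t)
    _ < elimChi m r (chi w ^ 2 * (chi s + chi t) + 1) :=
        mul_elimChi_add_one_lt hm hr (pow_pos (chi_pos w) 2) (le_add_right (chi_pos s))

theorem chi_eps_comm_lt (hm : 1 ≤ m) (a : FTm) : chi a ^ 2 + 1 < elimChi m r (chi a ^ 2 + 1) :=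
  lt_elimChi hm (Nat.succ_le_succ (pow_pos (chi_pos a) 2))

theorem chi_exelim_comm_lt (hm : 1 ≤ m) (hr : r ≤ 1) (n p : FTm) :
    chi n ^ 2 * elimChi m r (chi p) + 1 < elimChi m r (chi n ^ 2 * chi p + 1) :=
  mul_elimChi_add_one_lt hm hr (pow_pos (chi_pos n) 2) (chi_pos p)

end elimChi

theorem FCommRoot.chi_lt {M M' : FTm} (h : FCommRoot M M') : chi M' < chi M := by
  cases h with
  | @caseApp w _ _ s t n =>
    simpa [chi, chi_shiftTm, elimChi] using chi_case_comm_lt (chi_pos n) zero_le_one w s t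
  | @casePi1 w _ _ s t => simpa [chi, elimChi] using chi_case_comm_lt le_rfl zero_le_one w s t
  | @casePi2 w _ _ s t => simpa [chi, elimChi] using chi_case_comm_lt le_rfl zero_le_one w s t
  | @caseCase w _ _ _ s t a b =>
    simpa [chi, chi_shiftTm, elimChi] using
      chi_case_comm_lt (le_add_right (chi_pos a)) le_rfl w s t
  | @caseEps w s t _ => simpa [chi, elimChi] using chi_case_comm_lt le_rfl le_rfl w s t
  | @caseTapp w _ s t _ => simpa [chi, elimChi] using chi_case_comm_lt le_rfl zero_le_one w s t
  | @caseExelim w _ s t p _ =>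
    simpa [chi, chi_shiftTm, elimChi] using chi_case_comm_lt (chi_pos p) le_rfl w s t
  | @epsApp a _ _ n => simpa [chi, elimChi] using chi_eps_comm_lt (r := 0) (chi_pos n) a
  | @epsPi1 a => simpa [chi, elimChi] using chi_eps_comm_lt (r := 0) le_rfl a
  | @epsPi2 a => simpa [chi, elimChi] using chi_eps_comm_lt (r := 0) le_rfl a
  | @epsCase a _ _ _ s t =>
    simpa [chi, elimChi] using chi_eps_comm_lt (r := 1) (le_add_right (chi_pos s)) a
  | @epsEps a => simpa [chi, elimChi] using chi_eps_comm_lt (r := 1) le_rfl a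
  | @epsTapp a => simpa [chi, elimChi] using chi_eps_comm_lt (r := 0) le_rfl a
  | @epsExelim a _ p => simpa [chi, elimChi] using chi_eps_comm_lt (r := 1) (chi_pos p) a
  | @exelimApp m p _ _ n =>
    simpa [chi, chi_shiftTm, chi_shiftTy, elimChi] using
      chi_exelim_comm_lt (chi_pos n) zero_le_one m p
  | @exelimPi1 m p => simpa [chi, elimChi] using chi_exelim_comm_lt le_rfl zero_le_one m p
  | @exelimPi2 m p => simpa [chi, elimChi] using chi_exelim_comm_lt le_rfl zero_le_one m p
  | @exelimCase m p _ _ a b =>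
    simpa [chi, chi_shiftTm, chi_shiftTy, elimChi] using
      chi_exelim_comm_lt (le_add_right (chi_pos a)) le_rfl m p
  | @exelimEps m p => simpa [chi, elimChi] using chi_exelim_comm_lt le_rfl le_rfl m p
  | @exelimTapp m p => simpa [chi, elimChi] using chi_exelim_comm_lt le_rfl zero_le_one m p
  | @exelimExelim m p _ n =>
    simpa [chi, chi_shiftTm, chi_shiftTy, elimChi] using
      chi_exelim_comm_lt (chi_pos n) le_rfl m p

theorem CompatF.chi_lt {R : FTm → FTm → Prop} (hR : ∀ {a b}, R a b → chi b < chi a)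
    {M M' : FTm} (h : CompatF R M M') : chi M' < chi M := by
  induction h with
  | root h => exact hR h
  | lam _ ih | inl _ ih | inr _ ih | tlam _ ih | exintro _ ih => exact ih
  | appL _ ih | appR _ ih | pairL _ ih | pairR _ ih | proj1 _ ih | proj2 _ ih | caseW _ ih
    | caseS _ ih | caseT _ ih | eps _ ih | tapp _ ih | exelimM _ ih | exelimP _ ih =>
    simp only [chi]
    gcongr
    all_goals first
      | exact ih
      | exact chi_pos _
      | exact pow_pos (chi_pos _) 2
      | exact Nat.add_pos_left (chi_pos _) _

/-- The measure χ is everywhere positive and strictly decreases under every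
commutative (permutative) reduction step of full system F. -/
theorem chi_pos_and_decreasing :
    (∀ M : FTm, 1 ≤ chi M) ∧ (∀ M M' : FTm, FComm M M' → chi M' < chi M) :=
  ⟨chi_pos, fun _ _ h => CompatF.chi_lt FCommRoot.chi_lt h⟩
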